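/- Let p ∈ (0,1] and let G be a separable p-Banach space of almost universal disposition for finite-dimensional p-Banach spaces. Then every separable p-Banach space S admits a linear isometric embedding into G, i.e. there is a linear map e : S → G with N_G(e s) = N_S(s) for all s ∈ S. -/

import Mathlib

/- Common framework: p-normed and p-Banach spaces, following the paper's definitions. -/

namespace PGurarii

/-- A `p`-norm on a real vector space: `N x = 0 ↔ x = 0`, absolute homogeneity, and the
`p`-triangle inequality `N (x + y) ^ p ≤ N x ^ p + N y ^ p` (values in `ℝ₊`). -/
structure PNorm (p : ℝ) (X : Type) [AddCommGroup X] [Module ℝ X] where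
  N : X → ℝ
  nonneg : ∀ x : X, 0 ≤ N x
  eq_zero_iff : ∀ x : X, N x = 0 ↔ x = 0
  smul_eq : ∀ (a : ℝ) (x : X), N (a • x) = |a| * N x
  add_pow_le : ∀ x y : X, N (x + y) ^ p ≤ N x ^ p + N y ^ p

/-- Completeness (sequential) for the induced metric `d(x,y) = N (x - y) ^ p`. -/
def IsCompleteP (p : ℝ) {X : Type} [AddCommGroup X] [Module ℝ X] (NX : PNorm p X) : Prop :=
  ∀ u : ℕ → X,
    (∀ ε : ℝ, 0 < ε → ∃ n₀ : ℕ, ∀ m ≥ n₀, ∀ n ≥ n₀, NX.N (u m - u n) ^ p < ε) →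
    ∃ x : X, ∀ ε : ℝ, 0 < ε → ∃ n₀ : ℕ, ∀ n ≥ n₀, NX.N (u n - x) ^ p < ε

/-- Separability for the induced metric topology. -/
def IsSeparableP (p : ℝ) {X : Type} [AddCommGroup X] [Module ℝ X] (NX : PNorm p X) : Prop :=
  ∃ D : Set X, D.Countable ∧ ∀ x : X, ∀ ε : ℝ, 0 < ε → ∃ y ∈ D, NX.N (x - y) ^ p < ε

/-- A subspace is closed for the induced metric topology. -/
def IsClosedSubP (p : ℝ) {X : Type} [AddCommGroup X] [Module ℝ X] (NX : PNorm p X)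
    (S : Submodule ℝ X) : Prop :=
  ∀ x : X, (∀ ε : ℝ, 0 < ε → ∃ y ∈ S, NX.N (x - y) ^ p < ε) → x ∈ S

/-- The restriction of a `p`-norm to a subspace. -/
def PNorm.restrict {p : ℝ} {X : Type} [AddCommGroup X] [Module ℝ X]
    (NX : PNorm p X) (S : Submodule ℝ X) : PNorm p S where
  N x := NX.N x
  nonneg x := NX.nonneg x
  eq_zero_iff x := by rw [NX.eq_zero_iff]; exact ZeroMemClass.coe_eq_zero
  smul_eq a x := NX.smul_eq a x
  add_pow_le x y := NX.add_pow_le x y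

/-- A `p`-Banach space: a real vector space with a `p`-norm, complete for the induced metric. -/
structure PBanach (p : ℝ) where
  carrier : Type
  [addCommGroup : AddCommGroup carrier]
  [module : Module ℝ carrier]
  pnorm : PNorm p carrier
  complete : IsCompleteP p pnorm

attribute [instance] PBanach.addCommGroup PBanach.module

/-- `U` is of almost universal disposition for finite-dimensional `p`-Banach spaces: for every
`ε > 0`, every isometry from a subspace `X` of `U` (with the restricted `p`-norm) into a
finite-dimensional `p`-Banach space `Y` extends, after an `ε`-isometry `Y → U`, the inclusion. -/
def AUD (p : ℝ) (U : Type) [AddCommGroup U] [Module ℝ U] (NU : PNorm p U) : Prop :=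
  ∀ ε : ℝ, 0 < ε → ∀ Y : PBanach p, FiniteDimensional ℝ Y.carrier →
    ∀ (Xs : Submodule ℝ U) (g : Xs →ₗ[ℝ] Y.carrier),
      (∀ x : Xs, Y.pnorm.N (g x) = NU.N (x : U)) →
      ∃ f : Y.carrier →ₗ[ℝ] U,
        (∀ y, (1 - ε) * Y.pnorm.N y ≤ NU.N (f y) ∧ NU.N (f y) ≤ (1 + ε) * Y.pnorm.N y) ∧
        ∀ x : Xs, f (g x) = (x : U)

/-- `U` is of universal disposition for separable `p`-Banach spaces. -/
def UD (p : ℝ) (U : Type) [AddCommGroup U] [Module ℝ U] (NU : PNorm p U) : Prop :=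
  ∀ Y : PBanach p, IsSeparableP p Y.pnorm →
    ∀ (Xs : Submodule ℝ U), IsClosedSubP p NU Xs →
      ∀ g : Xs →ₗ[ℝ] Y.carrier, (∀ x : Xs, Y.pnorm.N (g x) = NU.N (x : U)) →
        ∃ f : Y.carrier →ₗ[ℝ] U, (∀ y, NU.N (f y) = Y.pnorm.N y) ∧ ∀ x : Xs, f (g x) = (x : U)

end PGurarii

/-!
Let `V n` be the span of the first `n` terms of a dense sequence in `S`. Almost universal
disposition turns a `2⁻ⁿ`-isometry `f n : V n → G` into a `2⁻⁽ⁿ⁺¹⁾`-isometry on `V (n + 1)` that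
moves `V n` by at most `2 · 2⁻ⁿ`: amalgamate `V (n + 1)` and the range of `f n` over `V n`, i.e.
build a finite-dimensional `p`-Banach space containing both isometrically in which every `a ∈ V n`
is `2⁻ⁿ`-close to `f n a`, and embed it almost isometrically into `G` over the range of `f n`.
The maps `f n` then converge on `⋃ n, V n` to a linear isometry, which extends to `S` by
continuity because `G` is complete.
-/
namespace PGurarii

open Filter Topology

theorem abs_rpow_sub_rpow_le {p a b δ : ℝ} (hp0 : 0 < p) (hp1 : p ≤ 1) (ha : 0 ≤ a)
    (hδ0 : 0 ≤ δ) (hδ1 : δ ≤ 1) (hlo : (1 - δ) * a ≤ b) (hhi : b ≤ (1 + δ) * a) :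
    |b ^ p - a ^ p| ≤ δ * a ^ p := by
  have hlo' : (1 - δ) * a ^ p ≤ b ^ p :=
    calc (1 - δ) * a ^ p ≤ (1 - δ) ^ p * a ^ p := by
          gcongr; exact Real.self_le_rpow_of_le_one (by linarith) (by linarith) hp1
      _ = ((1 - δ) * a) ^ p := (Real.mul_rpow (by linarith) ha).symm
      _ ≤ b ^ p := Real.rpow_le_rpow (by nlinarith) hlo hp0.le
  have hhi' : b ^ p ≤ (1 + δ) * a ^ p :=
    calc b ^ p ≤ ((1 + δ) * a) ^ p := Real.rpow_le_rpow (by nlinarith) hhi hp0.le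
      _ = (1 + δ) ^ p * a ^ p := Real.mul_rpow (by linarith) ha
      _ ≤ (1 + δ) * a ^ p := by
          gcongr; exact Real.rpow_le_self_of_one_le (by linarith) hp1
  rw [abs_sub_le_iff]
  constructor <;> linarith

theorem exists_seq_of_exists_succ {α : ℕ → Type*} {P : ∀ n, α n → Prop}
    {R : ∀ n, α n → α (n + 1) → Prop} (a₀ : α 0) (h₀ : P 0 a₀)
    (h : ∀ n a, P n a → ∃ b, P (n + 1) b ∧ R n a b) :
    ∃ F : ∀ n, α n, ∀ n, P n (F n) ∧ R n (F n) (F (n + 1)) := by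
  choose g hgP hgR using h
  let F' (n : ℕ) : {a : α n // P n a} := Nat.rec ⟨a₀, h₀⟩ (fun n a => ⟨g n a a.2, hgP n a a.2⟩) n
  exact ⟨fun n => (F' n).1, fun n => ⟨(F' n).2, hgR n _ (F' n).2⟩⟩

section PHomogeneousNorm

variable {E F : Type*} [NormedAddCommGroup E] [Module ℝ E] [NormedAddCommGroup F] [Module ℝ F]

theorem continuousSMul_of_norm_smul {p : ℝ} (hp : 0 < p)
    (hE : ∀ (c : ℝ) (x : E), ‖c • x‖ = |c| ^ p * ‖x‖) : ContinuousSMul ℝ E := by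
  refine ⟨continuous_iff_continuousAt.2 fun ⟨b, y⟩ => ?_⟩
  rw [ContinuousAt, tendsto_iff_norm_sub_tendsto_zero]
  have hbound (q : ℝ × E) :
      ‖q.1 • q.2 - b • y‖ ≤ |q.1| ^ p * ‖q.2 - y‖ + |q.1 - b| ^ p * ‖y‖ := by
    calc ‖q.1 • q.2 - b • y‖ = ‖q.1 • (q.2 - y) + (q.1 - b) • y‖ := by
          rw [smul_sub, sub_smul, sub_add_sub_cancel]
      _ ≤ _ := (norm_add_le _ _).trans_eq (by rw [hE, hE])
  have hcont : Continuous fun q : ℝ × E => |q.1| ^ p * ‖q.2 - y‖ + |q.1 - b| ^ p * ‖y‖ := by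
    have := Real.continuous_rpow_const hp.le
    fun_prop
  refine squeeze_zero (fun _ => norm_nonneg _) hbound ?_
  simpa [Real.zero_rpow hp.ne'] using hcont.tendsto (b, y)

theorem exists_linearMap_norm_eq_of_dense [ContinuousConstSMul ℝ E] [ContinuousConstSMul ℝ F]
    [CompleteSpace F] {V : Submodule ℝ E} (hV : Dense (V : Set E)) (L : V →ₗ[ℝ] F)
    (hL : ∀ v, ‖L v‖ = ‖v‖) : ∃ e : E →ₗ[ℝ] F, ∀ x, ‖e x‖ = ‖x‖ := by
  let Lc : V →L[ℝ] F := ⟨L, AddMonoidHomClass.continuous_of_bound L 1 fun v => by simp [hL]⟩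
  have hdense : DenseRange V.subtypeL := hV.denseRange_val
  have hinc : IsUniformInducing V.subtypeL := isUniformInducing_val _
  let e := Lc.extend V.subtypeL
  refine ⟨e, fun x => hdense.induction_on x
    (isClosed_eq (continuous_norm.comp e.continuous) continuous_norm) fun v => ?_⟩
  change ‖e (V.subtypeL v)‖ = _
  rw [Lc.extend_eq hdense hinc]
  exact hL v

theorem exists_linearMap_norm_eq_of_approx_chain [ContinuousConstSMul ℝ F] [CompleteSpace F]
    {V : ℕ → Submodule ℝ E} (hV : Monotone V) (f : ∀ n, V n →ₗ[ℝ] F) {ε : ℕ → ℝ}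
    (hε : Tendsto ε atTop (𝓝 0)) {C r : ℝ} (hr : r < 1)
    (hf : ∀ n (v : V n), |‖f n v‖ - ‖v‖| ≤ ε n * ‖v‖)
    (hstep : ∀ n (v : V n),
      ‖f (n + 1) (Submodule.inclusion (hV n.le_succ) v) - f n v‖ ≤ C * r ^ n * ‖v‖) :
    ∃ L : ↥(⨆ n, V n) →ₗ[ℝ] F, ∀ v, ‖L v‖ = ‖v‖ := by
  classical
  let Φ : ℕ → E → F := fun k x => if h : x ∈ V k then f k ⟨x, h⟩ else 0
  have hΦ {k : ℕ} {x : E} (h : x ∈ V k) : Φ k x = f k ⟨x, h⟩ := dif_pos h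
  have hmem {x : E} (hx : x ∈ ⨆ n, V n) : ∃ n, x ∈ V n :=
    (Submodule.mem_iSup_of_directed V hV.directed_le).1 hx
  have hev {x : E} (hx : x ∈ ⨆ n, V n) : ∀ᶠ k in atTop, x ∈ V k := by
    obtain ⟨n, hn⟩ := hmem hx
    exact eventually_atTop.2 ⟨n, fun k hk => hV hk hn⟩
  let L₀ : E → F := fun x => limUnder atTop fun k => Φ k x
  have hlim {x : E} (hx : x ∈ ⨆ n, V n) : Tendsto (fun k => Φ k x) atTop (𝓝 (L₀ x)) := by
    obtain ⟨n, hn⟩ := hmem hx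
    have hxk (k : ℕ) : x ∈ V (k + n) := hV (Nat.le_add_left n k) hn
    have hcauchy : CauchySeq fun k => Φ (k + n) x := by
      refine cauchySeq_of_le_geometric r (C * r ^ n * ‖x‖) hr fun k => ?_
      rw [Nat.add_right_comm, hΦ (hxk k), hΦ (hV (k + n).le_succ (hxk k)), dist_comm,
        dist_eq_norm]
      calc _ ≤ C * r ^ (k + n) * ‖x‖ := hstep (k + n) ⟨x, hxk k⟩
        _ = C * r ^ n * ‖x‖ * r ^ k := by ring
    obtain ⟨y, hy⟩ := cauchySeq_tendsto_of_complete hcauchy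
    exact tendsto_nhds_limUnder ⟨y, (tendsto_add_atTop_iff_nat n).1 hy⟩
  have hadd {x y : E} (hx : x ∈ ⨆ n, V n) (hy : y ∈ ⨆ n, V n) : L₀ (x + y) = L₀ x + L₀ y :=
    tendsto_nhds_unique (hlim (add_mem hx hy)) <| ((hlim hx).add (hlim hy)).congr' <|
      ((hev hx).and (hev hy)).mono fun k ⟨hxk, hyk⟩ => by
        beta_reduce
        rw [hΦ hxk, hΦ hyk, hΦ (add_mem hxk hyk), ← map_add]
        rfl
  have hsmul (c : ℝ) {x : E} (hx : x ∈ ⨆ n, V n) : L₀ (c • x) = c • L₀ x :=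
    tendsto_nhds_unique (hlim (Submodule.smul_mem _ c hx)) <| ((hlim hx).const_smul c).congr' <|
      (hev hx).mono fun k hxk => by
        beta_reduce
        rw [hΦ hxk, hΦ (Submodule.smul_mem _ c hxk), ← map_smul]
        rfl
  have hnorm {x : E} (hx : x ∈ ⨆ n, V n) : ‖L₀ x‖ = ‖x‖ := by
    refine tendsto_nhds_unique (hlim hx).norm (tendsto_iff_norm_sub_tendsto_zero.2 ?_)
    refine squeeze_zero' (Eventually.of_forall fun _ => norm_nonneg _)
      ((hev hx).mono fun k hxk => ?_) (by simpa using hε.mul_const ‖x‖)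
    rw [Real.norm_eq_abs, hΦ hxk]
    exact hf k ⟨x, hxk⟩
  exact ⟨⟨⟨fun v => L₀ v, fun v w => hadd v.2 w.2⟩, fun c v => hsmul c v.2⟩, fun v => hnorm v.2⟩

end PHomogeneousNorm

section PNorm

variable {p : ℝ} {X : Type} [AddCommGroup X] [Module ℝ X]

theorem PNorm.pow_smul (NX : PNorm p X) (c : ℝ) (x : X) :
    NX.N (c • x) ^ p = |c| ^ p * NX.N x ^ p := by
  rw [NX.smul_eq, Real.mul_rpow (abs_nonneg c) (NX.nonneg x)]

/-- The `p`-th power of a `p`-norm is an additive group norm, whose metric is the metric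
`d(x, y) = N (x - y) ^ p` of the `p`-normed space. -/
noncomputable abbrev PNorm.toNormedAddCommGroup (hp : 0 < p) (NX : PNorm p X) :
    NormedAddCommGroup X :=
  AddGroupNorm.toNormedAddCommGroup
    { toFun := fun x => NX.N x ^ p
      map_zero' := by simp [(NX.eq_zero_iff 0).2 rfl, Real.zero_rpow hp.ne']
      add_le' := NX.add_pow_le
      neg' := fun x => by simpa using NX.pow_smul (-1) x
      eq_zero_of_map_eq_zero' := fun x hx =>
        (NX.eq_zero_iff x).1 ((Real.rpow_eq_zero (NX.nonneg x) hp.ne').1 hx) }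

theorem PNorm.norm_smul (hp : 0 < p) (NX : PNorm p X) (c : ℝ) (x : X) :
    letI := NX.toNormedAddCommGroup hp
    ‖c • x‖ = |c| ^ p * ‖x‖ :=
  NX.pow_smul c x

theorem PNorm.dist_eq (hp : 0 < p) (NX : PNorm p X) (x y : X) :
    letI := NX.toNormedAddCommGroup hp
    dist x y = NX.N (x - y) ^ p := by
  let _ := NX.toNormedAddCommGroup hp
  exact dist_eq_norm x y

theorem PNorm.isCompleteP_iff_completeSpace (hp : 0 < p) (NX : PNorm p X) :
    letI := NX.toNormedAddCommGroup hp
    IsCompleteP p NX ↔ CompleteSpace X := by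
  let _ := NX.toNormedAddCommGroup hp
  simp only [IsCompleteP, ← NX.dist_eq hp, ← Metric.cauchySeq_iff, ← Metric.tendsto_atTop]
  exact ⟨fun h => Metric.complete_of_cauchySeq_tendsto h,
    fun _ u hu => cauchySeq_tendsto_of_complete hu⟩

theorem PNorm.separableSpace (hp : 0 < p) (NX : PNorm p X) (hX : IsSeparableP p NX) :
    letI := NX.toNormedAddCommGroup hp
    TopologicalSpace.SeparableSpace X := by
  let _ := NX.toNormedAddCommGroup hp
  obtain ⟨D, hD, hdense⟩ := hX
  exact ⟨⟨D, hD, Metric.dense_iff.2 fun x r hr => by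
    obtain ⟨y, hy, hxy⟩ := hdense x r hr
    exact ⟨y, Metric.mem_ball'.2 (by rwa [NX.dist_eq]), hy⟩⟩⟩

theorem PNorm.isCompleteP_of_finiteDimensional [FiniteDimensional ℝ X] (hp : 0 < p)
    (NX : PNorm p X) : IsCompleteP p NX := by
  let _ := NX.toNormedAddCommGroup hp
  have := continuousSMul_of_norm_smul hp (NX.norm_smul hp)
  exact (NX.isCompleteP_iff_completeSpace hp).2 (FiniteDimensional.complete ℝ X)

noncomputable def PNorm.ofPow (hp : 0 < p) (M : X → ℝ) (hM0 : ∀ x, 0 ≤ M x)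
    (hM : ∀ x, M x = 0 ↔ x = 0) (hsmul : ∀ (c : ℝ) (x : X), M (c • x) = |c| ^ p * M x)
    (hadd : ∀ x y, M (x + y) ≤ M x + M y) : PNorm p X where
  N x := M x ^ p⁻¹
  nonneg x := Real.rpow_nonneg (hM0 x) _
  eq_zero_iff x := by rw [Real.rpow_eq_zero (hM0 x) (inv_ne_zero hp.ne'), hM]
  smul_eq c x := by
    rw [hsmul, Real.mul_rpow (by positivity) (hM0 x), Real.rpow_rpow_inv (abs_nonneg c) hp.ne']
  add_pow_le x y := by
    simp only [Real.rpow_inv_rpow (hM0 _) hp.ne']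
    exact hadd x y

theorem PNorm.ofPow_rpow (hp : 0 < p) (M : X → ℝ) (hM0 hM hsmul hadd) (x : X) :
    (PNorm.ofPow hp M hM0 hM hsmul hadd).N x ^ p = M x :=
  Real.rpow_inv_rpow (hM0 x) hp.ne'

end PNorm

section Amalgam

variable {p : ℝ} {E C : Type*} [NormedAddCommGroup E] [Module ℝ E]
  [NormedAddCommGroup C] [Module ℝ C] {A B : Submodule ℝ E} (f : A →ₗ[ℝ] C) (ε : ℝ)

/-- The `p`-th power of the norm of the amalgamation of `B` and `C` over `A ⊆ E` along `f`:
the infimal convolution that makes `(a, 0)` and `(0, f a)` `ε`-close. -/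
noncomputable def amalgamNorm (v : B × C) : ℝ :=
  ⨅ x : A, ‖(v.1 : E) - x‖ + ‖v.2 + f x‖ + ε * ‖x‖

variable {f ε}

theorem amalgamNorm_le (hε : 0 ≤ ε) (v : B × C) (x : A) :
    amalgamNorm f ε v ≤ ‖(v.1 : E) - x‖ + ‖v.2 + f x‖ + ε * ‖x‖ :=
  ciInf_le ⟨0, by rintro _ ⟨y, rfl⟩; positivity⟩ x

theorem le_amalgamNorm {v : B × C} {t : ℝ}
    (h : ∀ x : A, t ≤ ‖(v.1 : E) - x‖ + ‖v.2 + f x‖ + ε * ‖x‖) : t ≤ amalgamNorm f ε v :=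
  le_ciInf h

theorem amalgamNorm_nonneg (hε : 0 ≤ ε) (v : B × C) : 0 ≤ amalgamNorm f ε v :=
  le_amalgamNorm fun _ => by positivity

theorem amalgamNorm_add_le (hε : 0 ≤ ε) (v w : B × C) :
    amalgamNorm f ε (v + w) ≤ amalgamNorm f ε v + amalgamNorm f ε w := by
  refine le_ciInf_add_ciInf fun x y => (amalgamNorm_le hε _ (x + y)).trans ?_
  have h₁ : ‖((v + w).1 : E) - ↑(x + y)‖ ≤ ‖(v.1 : E) - x‖ + ‖(w.1 : E) - y‖ := by
    simpa [add_sub_add_comm] using norm_add_le ((v.1 : E) - x) ((w.1 : E) - y)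
  have h₂ : ‖(v + w).2 + f (x + y)‖ ≤ ‖v.2 + f x‖ + ‖w.2 + f y‖ := by
    simpa [map_add, add_add_add_comm] using norm_add_le (v.2 + f x) (w.2 + f y)
  nlinarith [norm_add_le x y]

theorem amalgamNorm_zero (hε : 0 ≤ ε) : amalgamNorm f ε (0 : B × C) = 0 :=
  le_antisymm ((amalgamNorm_le hε _ 0).trans_eq (by simp)) (amalgamNorm_nonneg hε _)

theorem amalgamNorm_smul (hp : 0 < p) (hε : 0 ≤ ε)
    (hE : ∀ (c : ℝ) (x : E), ‖c • x‖ = |c| ^ p * ‖x‖)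
    (hC : ∀ (c : ℝ) (y : C), ‖c • y‖ = |c| ^ p * ‖y‖) (c : ℝ) (v : B × C) :
    amalgamNorm f ε (c • v) = |c| ^ p * amalgamNorm f ε v := by
  rcases eq_or_ne c 0 with rfl | hc
  · simp [amalgamNorm_zero hε, Real.zero_rpow hp.ne']
  have hsurj : Function.Surjective fun x : A => c • x := fun x => ⟨c⁻¹ • x, smul_inv_smul₀ hc x⟩
  rw [amalgamNorm, amalgamNorm, Real.mul_iInf_of_nonneg (by positivity), ← hsurj.iInf_comp]
  congr 1 with x
  have h₁ : ((c • v).1 : E) - ↑(c • x) = c • ((v.1 : E) - x) := by simp [smul_sub]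
  have h₂ : (c • v).2 + f (c • x) = c • (v.2 + f x) := by simp [smul_add]
  have h₃ : ‖c • x‖ = |c| ^ p * ‖x‖ := hE c x
  rw [h₁, h₂, h₃, hE, hC]
  ring

theorem amalgamNorm_inl (hε : 0 ≤ ε) (hf : ∀ a, |‖f a‖ - ‖a‖| ≤ ε * ‖a‖) (b : B) :
    amalgamNorm f ε (b, 0) = ‖b‖ := by
  refine le_antisymm ((amalgamNorm_le hε _ 0).trans_eq (by simp)) (le_amalgamNorm fun x => ?_)
  have hb : ‖b‖ ≤ ‖(b : E) - x‖ + ‖x‖ := norm_le_norm_sub_add (b : E) x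
  have hx := (abs_le.1 (hf x)).1
  simp only [zero_add]
  linarith

theorem amalgamNorm_inr (hε : 0 ≤ ε) (hf : ∀ a, |‖f a‖ - ‖a‖| ≤ ε * ‖a‖) (c : C) :
    amalgamNorm f ε ((0 : B), c) = ‖c‖ := by
  refine le_antisymm ((amalgamNorm_le hε _ 0).trans_eq (by simp)) (le_amalgamNorm fun x => ?_)
  have hc : ‖c‖ ≤ ‖c + f x‖ + ‖f x‖ := norm_le_add_norm_add c (f x)
  have hx := (abs_le.1 (hf x)).2
  have : ‖((0 : B) : E) - x‖ = ‖x‖ := by simp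
  linarith

theorem amalgamNorm_inclusion_neg_le (hε : 0 ≤ ε) (hAB : A ≤ B) (a : A) :
    amalgamNorm f ε (Submodule.inclusion hAB a, -f a) ≤ ε * ‖a‖ :=
  (amalgamNorm_le hε _ a).trans_eq (by simp)

theorem amalgamNorm_eq_zero_iff (hε : 0 < ε) (hf : ∀ a, |‖f a‖ - ‖a‖| ≤ ε * ‖a‖)
    (v : B × C) : amalgamNorm f ε v = 0 ↔ v = 0 := by
  refine ⟨fun hv => ?_, fun hv => hv ▸ amalgamNorm_zero hε.le⟩
  set κ := ε / (1 + ε)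
  have hκ : 0 < κ := by positivity
  have hκε : κ * (1 + ε) = ε := div_mul_cancel₀ ε (by positivity)
  have hκ1 : κ ≤ 1 := (div_le_one (by positivity)).2 (by linarith)
  have h₁ : κ * ‖v.1‖ ≤ amalgamNorm f ε v := le_amalgamNorm fun x => by
    have hb : ‖v.1‖ ≤ ‖(v.1 : E) - x‖ + ‖x‖ := norm_le_norm_sub_add (v.1 : E) x
    have hεx : ε * ‖x‖ = κ * ‖x‖ + κ * ε * ‖x‖ := by linear_combination (-‖x‖) * hκε
    nlinarith [norm_nonneg (v.2 + f x), mul_le_mul_of_nonneg_left hb hκ.le,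
      mul_nonneg (sub_nonneg.2 hκ1) (norm_nonneg ((v.1 : E) - x)),
      mul_nonneg (mul_nonneg hκ.le hε.le) (norm_nonneg x)]
  have h₂ : κ * ‖v.2‖ ≤ amalgamNorm f ε v := le_amalgamNorm fun x => by
    have hc : ‖v.2‖ ≤ ‖v.2 + f x‖ + ‖f x‖ := norm_le_add_norm_add v.2 (f x)
    have hx := (abs_le.1 (hf x)).2
    nlinarith [norm_nonneg ((v.1 : E) - x), norm_nonneg x, norm_nonneg (v.2 + f x),
      mul_le_mul_of_nonneg_left hc hκ.le, mul_le_mul_of_nonneg_left hx hκ.le]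
  rw [hv] at h₁ h₂
  exact Prod.ext (norm_le_zero_iff.1 (nonpos_of_mul_nonpos_right h₁ hκ))
    (norm_le_zero_iff.1 (nonpos_of_mul_nonpos_right h₂ hκ))

end Amalgam

section AlmostUniversalDisposition

variable {p : ℝ} {U : Type} [NormedAddCommGroup U] [Module ℝ U] {NU : PNorm p U}
  {E : Type} [NormedAddCommGroup E] [Module ℝ E]

theorem AUD.exists_extension_step (hU : AUD p U NU) (hp0 : 0 < p) (hp1 : p ≤ 1)
    (hNU : ∀ u, ‖u‖ = NU.N u ^ p) (hE : ∀ (c : ℝ) (x : E), ‖c • x‖ = |c| ^ p * ‖x‖)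
    {A B : Submodule ℝ E} (hAB : A ≤ B) [FiniteDimensional ℝ B] {ε δ : ℝ} (hε : 0 < ε)
    (hδ0 : 0 < δ) (hδ1 : δ ≤ 1) (f : A →ₗ[ℝ] U) (hf : ∀ a, |‖f a‖ - ‖a‖| ≤ ε * ‖a‖) :
    ∃ g : B →ₗ[ℝ] U, (∀ b, |‖g b‖ - ‖b‖| ≤ δ * ‖b‖) ∧
      ∀ a, ‖g (Submodule.inclusion hAB a) - f a‖ ≤ 2 * ε * ‖a‖ := by
  have : FiniteDimensional ℝ A := Submodule.finiteDimensional_of_le hAB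
  let C := LinearMap.range f
  have hC (c : ℝ) (y : C) : ‖c • y‖ = |c| ^ p * ‖y‖ := by
    change ‖c • (y : U)‖ = |c| ^ p * ‖(y : U)‖
    rw [hNU, hNU, NU.pow_smul]
  let f₀ : A →ₗ[ℝ] C := f.rangeRestrict
  have hf₀ : ∀ a, |‖f₀ a‖ - ‖a‖| ≤ ε * ‖a‖ := hf
  let NZ : PNorm p (B × C) := PNorm.ofPow hp0 (amalgamNorm f₀ ε) (amalgamNorm_nonneg hε.le)
    (amalgamNorm_eq_zero_iff hε hf₀) (amalgamNorm_smul hp0 hε.le hE hC)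
    (amalgamNorm_add_le hε.le)
  have hNZ (z : B × C) : NZ.N z ^ p = amalgamNorm f₀ ε z := PNorm.ofPow_rpow hp0 _ _ _ _ _ z
  let Z : PBanach p := ⟨B × C, NZ, NZ.isCompleteP_of_finiteDimensional hp0⟩
  obtain ⟨h, hh, hhC⟩ := hU δ hδ0 Z (inferInstanceAs (FiniteDimensional ℝ (B × C))) C
    (LinearMap.inr ℝ B C) fun y => by
      rw [← Real.rpow_left_inj (NZ.nonneg _) (NU.nonneg _) hp0.ne', hNZ, ← hNU]
      exact amalgamNorm_inr hε.le hf₀ y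
  have hhZ (z : B × C) : |‖h z‖ - amalgamNorm f₀ ε z| ≤ δ * amalgamNorm f₀ ε z := by
    rw [hNU, ← hNZ]
    exact abs_rpow_sub_rpow_le hp0 hp1 (NZ.nonneg z) hδ0.le hδ1 (hh z).1 (hh z).2
  refine ⟨h ∘ₗ LinearMap.inl ℝ B C, fun b => ?_, fun a => ?_⟩
  · have := hhZ (b, 0)
    rwa [amalgamNorm_inl hε.le hf₀] at this
  · have hfa : f a = h (0, f₀ a) := (hhC (f₀ a)).symm
    set z : B × C := (Submodule.inclusion hAB a, -f₀ a)
    have hdiag : amalgamNorm f₀ ε z ≤ ε * ‖a‖ := amalgamNorm_inclusion_neg_le hε.le hAB a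
    have hz : h (Submodule.inclusion hAB a, 0) - f a = h z := by
      rw [hfa, ← map_sub, Prod.mk_sub_mk, sub_zero, zero_sub]
    have hbound := (abs_le.1 (hhZ z)).2
    have hnonneg : 0 ≤ amalgamNorm f₀ ε z := amalgamNorm_nonneg hε.le z
    rw [LinearMap.comp_apply, LinearMap.inl_apply, hz]
    nlinarith [mul_le_mul_of_nonneg_right hδ1 hnonneg]

theorem AUD.exists_approx_chain (hU : AUD p U NU) (hp0 : 0 < p) (hp1 : p ≤ 1)
    (hNU : ∀ u, ‖u‖ = NU.N u ^ p) (hE : ∀ (c : ℝ) (x : E), ‖c • x‖ = |c| ^ p * ‖x‖)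
    {V : ℕ → Submodule ℝ E} (hV : Monotone V) [∀ n, FiniteDimensional ℝ (V n)] :
    ∃ f : ∀ n, V n →ₗ[ℝ] U, ∀ n, (∀ v, |‖f n v‖ - ‖v‖| ≤ (1 / 2) ^ n * ‖v‖) ∧
      ∀ v, ‖f (n + 1) (Submodule.inclusion (hV n.le_succ) v) - f n v‖ ≤ 2 * (1 / 2) ^ n * ‖v‖ :=
  exists_seq_of_exists_succ (P := fun n (f : V n →ₗ[ℝ] U) =>
      ∀ v, |‖f v‖ - ‖v‖| ≤ (1 / 2) ^ n * ‖v‖)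
    (R := fun n f g => ∀ v, ‖g (Submodule.inclusion (hV n.le_succ) v) - f v‖ ≤
      2 * (1 / 2) ^ n * ‖v‖)
    0 (fun v => by simp) fun n _ hf =>
    hU.exists_extension_step hp0 hp1 hNU hE (hV n.le_succ) (by positivity) (by positivity)
      (pow_le_one₀ (by norm_num) (by norm_num)) _ hf

end AlmostUniversalDisposition

theorem statement2 (p : ℝ) (hp0 : 0 < p) (hp1 : p ≤ 1)
    (G : PBanach p) (hGaud : AUD p G.carrier G.pnorm)
    (S : PBanach p) (hSsep : IsSeparableP p S.pnorm) :
    ∃ e : S.carrier →ₗ[ℝ] G.carrier, ∀ s : S.carrier, G.pnorm.N (e s) = S.pnorm.N s := by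
  let _ := S.pnorm.toNormedAddCommGroup hp0
  let _ := G.pnorm.toNormedAddCommGroup hp0
  have hS := S.pnorm.norm_smul hp0
  have := continuousSMul_of_norm_smul hp0 hS
  have := continuousSMul_of_norm_smul hp0 (G.pnorm.norm_smul hp0)
  have := (G.pnorm.isCompleteP_iff_completeSpace hp0).1 G.complete
  have := S.pnorm.separableSpace hp0 hSsep
  obtain ⟨u, hu⟩ := TopologicalSpace.exists_dense_seq S.carrier
  let V (n : ℕ) : Submodule ℝ S.carrier := Submodule.span ℝ (u '' Set.Iio n)
  have hV : Monotone V := fun m n h => Submodule.span_mono (Set.image_mono (Set.Iio_subset_Iio h))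
  have (n : ℕ) : FiniteDimensional ℝ (V n) :=
    FiniteDimensional.span_of_finite ℝ ((Set.finite_Iio n).image u)
  have hdense : Dense ((⨆ n, V n : Submodule ℝ S.carrier) : Set S.carrier) :=
    hu.mono <| Set.range_subset_iff.2 fun i =>
      Submodule.mem_iSup_of_mem (i + 1) (Submodule.subset_span ⟨i, Nat.lt_succ_self i, rfl⟩)
  obtain ⟨f, hf⟩ := hGaud.exists_approx_chain hp0 hp1 (fun _ => rfl) hS hV
  obtain ⟨L, hL⟩ := exists_linearMap_norm_eq_of_approx_chain hV f
    (tendsto_pow_atTop_nhds_zero_of_lt_one (by norm_num) (by norm_num))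
    (by norm_num : (1 / 2 : ℝ) < 1) (fun n => (hf n).1) (fun n => (hf n).2)
  obtain ⟨e, he⟩ := exists_linearMap_norm_eq_of_dense hdense L hL
  exact ⟨e, fun s => (Real.rpow_left_inj (G.pnorm.nonneg _) (S.pnorm.nonneg _) hp0.ne').1 (he s)⟩

end PGurarii
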